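/- Let B = B₁ + B₂ be any Lebesgue type decomposition of B with respect to A, and let B_reg = (I − P) ∘ B, where P is the orthogonal projection of K onto D(A,B)⊥. Then ‖B₁ h‖ ≤ ‖B_reg h‖ for all h ∈ E. -/

import Mathlib

open ContinuousLinearMap
open scoped InnerProductSpace

/-- A witness for almost domination of `B : E → K` by `A : E → H`: a sequence of complex
Hilbert spaces `Kn n`, bounded operators `Bn n : E → Kn n` and constants `c n ≥ 0` such that
for all `f : E` one has `‖Bn n f‖ ≤ c n * ‖A f‖`, `‖Bn n f‖ ≤ ‖Bn (n+1) f‖` and `‖Bn n f‖`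
converges (increasingly) to `‖B f‖`. -/
structure AlmostDominatedWitness
    {E H K : Type}
    [NormedAddCommGroup E] [InnerProductSpace ℂ E] [CompleteSpace E]
    [NormedAddCommGroup H] [InnerProductSpace ℂ H] [CompleteSpace H]
    [NormedAddCommGroup K] [InnerProductSpace ℂ K] [CompleteSpace K]
    (A : E →L[ℂ] H) (B : E →L[ℂ] K) where
  Kn : ℕ → Type
  [nacg : ∀ n, NormedAddCommGroup (Kn n)]
  [ips : ∀ n, InnerProductSpace ℂ (Kn n)]
  [cs : ∀ n, CompleteSpace (Kn n)]
  Bn : ∀ n, E →L[ℂ] Kn n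
  c : ℕ → ℝ
  c_nonneg : ∀ n, 0 ≤ c n
  bound : ∀ (n : ℕ) (f : E), ‖Bn n f‖ ≤ c n * ‖A f‖
  mono : ∀ (n : ℕ) (f : E), ‖Bn n f‖ ≤ ‖Bn (n + 1) f‖
  tendsto : ∀ f : E, Filter.Tendsto (fun n => ‖Bn n f‖) Filter.atTop (nhds ‖B f‖)

/-- `B` is almost dominated by `A`. -/
def AlmostDominated
    {E H K : Type}
    [NormedAddCommGroup E] [InnerProductSpace ℂ E] [CompleteSpace E]
    [NormedAddCommGroup H] [InnerProductSpace ℂ H] [CompleteSpace H]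
    [NormedAddCommGroup K] [InnerProductSpace ℂ K] [CompleteSpace K]
    (A : E →L[ℂ] H) (B : E →L[ℂ] K) : Prop :=
  Nonempty (AlmostDominatedWitness A B)

/-- `B` is singular with respect to `A`: every bounded operator `D : E → E` dominated by
both `A` and `B` is zero. -/
def SingularWith
    {E H K : Type}
    [NormedAddCommGroup E] [InnerProductSpace ℂ E] [CompleteSpace E]
    [NormedAddCommGroup H] [InnerProductSpace ℂ H] [CompleteSpace H]
    [NormedAddCommGroup K] [InnerProductSpace ℂ K] [CompleteSpace K]
    (A : E →L[ℂ] H) (B : E →L[ℂ] K) : Prop :=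
  ∀ D : E →L[ℂ] E,
    (∃ c : ℝ, 0 < c ∧ ∀ f : E, ‖D f‖ ≤ c * ‖A f‖) →
    (∃ c : ℝ, 0 < c ∧ ∀ f : E, ‖D f‖ ≤ c * ‖B f‖) → D = 0

/-- The subspace `D(A,B) = {k ∈ K : B* k ∈ ran A*}`. -/
noncomputable def DAB
    {E H K : Type}
    [NormedAddCommGroup E] [InnerProductSpace ℂ E] [CompleteSpace E]
    [NormedAddCommGroup H] [InnerProductSpace ℂ H] [CompleteSpace H]
    [NormedAddCommGroup K] [InnerProductSpace ℂ K] [CompleteSpace K]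
    (A : E →L[ℂ] H) (B : E →L[ℂ] K) : Submodule ℂ K :=
  Submodule.comap (adjoint B : K →ₗ[ℂ] E) (LinearMap.range (adjoint A : H →ₗ[ℂ] E))

/-- `(B₁, B₂)` is a Lebesgue type decomposition of `B` with respect to `A`:
`B = B₁ + B₂`, `ran B₁ ⊥ ran B₂`, `B₁` is almost dominated by `A`, and `B₂` is singular
with respect to `A`. -/
def IsLebesgueTypeDecomp
    {E H K : Type}
    [NormedAddCommGroup E] [InnerProductSpace ℂ E] [CompleteSpace E]
    [NormedAddCommGroup H] [InnerProductSpace ℂ H] [CompleteSpace H]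
    [NormedAddCommGroup K] [InnerProductSpace ℂ K] [CompleteSpace K]
    (A : E →L[ℂ] H) (B B₁ B₂ : E →L[ℂ] K) : Prop :=
  B = B₁ + B₂ ∧ (∀ f g : E, ⟪B₁ f, B₂ g⟫_ℂ = 0) ∧
    AlmostDominated A B₁ ∧ SingularWith A B₂

/-! Each approximant `Bₙ` of `B₁` is dominated both by `A` and by `B`, so by Douglas' lemma
`Bₙ* Bₙ h = B* dₙ` with `dₙ ∈ D(A,B)` and `‖dₙ‖ ≤ ‖B₁ h‖`. Pairing with `g` and letting
`n → ∞` gives `‖⟪B g, B₁ h⟫‖ ≤ ‖B g - k‖ ‖B₁ h‖` for every `k ⊥ D(A,B)`. As `ker B* ⊆ D(A,B)`,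
such a `k` lies in the closure of `ran B`, so `⟪k, B₁ h⟫ = 0`. Hence `B₁ h ⊥ P B h`, and
`B_reg h = B₁ h + (B₂ h - P B h)` is an orthogonal sum. -/

open Filter Topology

section InnerProductSpace

variable {𝕜 E F G : Type*} [RCLike 𝕜]
  [NormedAddCommGroup E] [InnerProductSpace 𝕜 E]
  [NormedAddCommGroup F] [InnerProductSpace 𝕜 F]
  [NormedAddCommGroup G] [InnerProductSpace 𝕜 G]

theorem norm_le_norm_add_of_inner_eq_zero {x y : E} (h : ⟪x, y⟫_𝕜 = 0) : ‖x‖ ≤ ‖x + y‖ := by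
  rw [mul_self_le_mul_self_iff (norm_nonneg _) (norm_nonneg _),
    norm_add_sq_eq_norm_sq_add_norm_sq_of_inner_eq_zero x y h]
  exact le_add_of_nonneg_right (mul_self_nonneg _)

theorem exists_dual_range_apply_eq_of_norm_le (T : E →L[𝕜] F) (S : E →L[𝕜] G) {c : ℝ}
    (hc : 0 ≤ c) (hST : ∀ x, ‖S x‖ ≤ c * ‖T x‖) (w : G) :
    ∃ φ : StrongDual 𝕜 T.range, ‖φ‖ ≤ c * ‖w‖ ∧
      ∀ x, φ ⟨T x, T.mem_range_self x⟩ = ⟪w, S x⟫_𝕜 := by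
  have hker :
      LinearMap.ker (T : E →ₗ[𝕜] F) ≤ LinearMap.ker ((innerSL 𝕜 w).comp S : E →ₗ[𝕜] 𝕜) :=
    fun x hx ↦ by
      have hTx : T x = 0 := hx
      have : S x = 0 := norm_le_zero_iff.mp (by simpa [hTx] using hST x)
      simp [this]
  let φ₀ := (LinearMap.ker (T : E →ₗ[𝕜] F)).liftQ _ hker ∘ₗ
    (T : E →ₗ[𝕜] F).quotKerEquivRange.symm.toLinearMap
  have hφ₀ : ∀ x, φ₀ ⟨T x, T.mem_range_self x⟩ = ⟪w, S x⟫_𝕜 := fun x ↦ by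
    simp only [φ₀, LinearMap.comp_apply, LinearEquiv.coe_coe]
    erw [(T : E →ₗ[𝕜] F).quotKerEquivRange_symm_apply_image x]
    rfl
  have hbound : ∀ y, ‖φ₀ y‖ ≤ c * ‖w‖ * ‖y‖ := by
    rintro ⟨_, x, rfl⟩
    calc ‖φ₀ ⟨T x, _⟩‖ = ‖⟪w, S x⟫_𝕜‖ := by rw [hφ₀]
      _ ≤ ‖w‖ * (c * ‖T x‖) := (norm_inner_le_norm _ _).trans (by gcongr; exact hST x)
      _ = c * ‖w‖ * ‖T x‖ := by ring
  exact ⟨φ₀.mkContinuous _ hbound, LinearMap.mkContinuous_norm_le _ (by positivity) _, hφ₀⟩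

/-- Douglas' lemma. -/
theorem exists_adjoint_apply_eq_of_norm_le [CompleteSpace E] [CompleteSpace F] [CompleteSpace G]
    (T : E →L[𝕜] F) (S : E →L[𝕜] G) {c : ℝ} (hc : 0 ≤ c) (hST : ∀ x, ‖S x‖ ≤ c * ‖T x‖)
    (w : G) : ∃ e : F, ‖e‖ ≤ c * ‖w‖ ∧ adjoint T e = adjoint S w := by
  obtain ⟨φ, hφ_norm, hφ⟩ := exists_dual_range_apply_eq_of_norm_le T S hc hST w
  obtain ⟨g, hg, hg_norm⟩ := exists_extension_norm_eq T.range φ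
  refine ⟨(InnerProductSpace.toDual 𝕜 F).symm g, by simpa [hg_norm] using hφ_norm, ?_⟩
  refine ext_inner_right 𝕜 fun x ↦ ?_
  rw [adjoint_inner_left, adjoint_inner_left, InnerProductSpace.toDual_symm_apply]
  exact (hg _).trans (hφ x)

theorem tendsto_inner_of_tendsto_norm {ι : Type*} {l : Filter ι} {G : ι → Type*}
    [∀ i, NormedAddCommGroup (G i)] [∀ i, InnerProductSpace 𝕜 (G i)]
    (S : ∀ i, E →L[𝕜] G i) (T : E →L[𝕜] F)
    (hST : ∀ x, Tendsto (fun i ↦ ‖S i x‖) l (𝓝 ‖T x‖)) (x y : E) :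
    Tendsto (fun i ↦ ⟪S i x, S i y⟫_𝕜) l (𝓝 ⟪T x, T y⟫_𝕜) := by
  have h : ∀ z, Tendsto (fun i ↦ (‖S i z‖ : 𝕜)) l (𝓝 (‖T z‖ : 𝕜)) :=
    fun z ↦ (RCLike.continuous_ofReal.tendsto _).comp (hST z)
  simp only [inner_eq_sum_norm_sq_div_four, ← map_add, ← map_sub, ← map_smul]
  exact (((h _).pow 2 |>.sub <| (h _).pow 2).add
    ((((h _).pow 2).sub ((h _).pow 2)).mul_const _)).div_const _

end InnerProductSpace

attribute [instance] AlmostDominatedWitness.nacg AlmostDominatedWitness.ips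
  AlmostDominatedWitness.cs

section LebesgueDecomposition

variable {E H K : Type}
  [NormedAddCommGroup E] [InnerProductSpace ℂ E] [CompleteSpace E]
  [NormedAddCommGroup H] [InnerProductSpace ℂ H] [CompleteSpace H]
  [NormedAddCommGroup K] [InnerProductSpace ℂ K] [CompleteSpace K]
  {A : E →L[ℂ] H} {B B₁ B₂ : E →L[ℂ] K}

theorem AlmostDominatedWitness.norm_le (W : AlmostDominatedWitness A B) (n : ℕ) (f : E) :
    ‖W.Bn n f‖ ≤ ‖B f‖ :=
  (monotone_nat_of_le_succ (W.mono · f)).ge_of_tendsto (W.tendsto f) n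

theorem ker_adjoint_le_DAB : (adjoint B).ker ≤ DAB A B := fun k hk ↦ by
  simp [DAB, LinearMap.mem_ker.mp hk]

theorem orthogonal_DAB_le_closure_range : (DAB A B)ᗮ ≤ B.range.topologicalClosure := by
  simpa [orthogonal_ker] using Submodule.orthogonal_le (ker_adjoint_le_DAB (A := A) (B := B))

theorem exists_mem_DAB_adjoint_apply_eq {G : Type} [NormedAddCommGroup G]
    [InnerProductSpace ℂ G] [CompleteSpace G] (S : E →L[ℂ] G) {c : ℝ} (hc : 0 ≤ c)
    (hSA : ∀ f, ‖S f‖ ≤ c * ‖A f‖) (hSB : ∀ f, ‖S f‖ ≤ ‖B f‖) (w : G) :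
    ∃ d ∈ DAB A B, ‖d‖ ≤ ‖w‖ ∧ adjoint B d = adjoint S w := by
  obtain ⟨d, hd, hBd⟩ :=
    exists_adjoint_apply_eq_of_norm_le B S zero_le_one (by simpa using hSB) w
  obtain ⟨e, -, hAe⟩ := exists_adjoint_apply_eq_of_norm_le A S hc hSA w
  exact ⟨d, ⟨e, by simpa [hBd] using hAe⟩, by simpa using hd, hBd⟩

theorem AlmostDominatedWitness.norm_inner_le (W : AlmostDominatedWitness A B₁)
    (hB₁ : ∀ f, ‖B₁ f‖ ≤ ‖B f‖) {k : K} (hk : k ∈ (DAB A B)ᗮ) (g h : E) :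
    ‖⟪B₁ g, B₁ h⟫_ℂ‖ ≤ ‖B g - k‖ * ‖B₁ h‖ := by
  refine le_of_tendsto (tendsto_inner_of_tendsto_norm W.Bn B₁ W.tendsto g h).norm
    (Eventually.of_forall fun n ↦ ?_)
  obtain ⟨d, hdD, hd, hBd⟩ := exists_mem_DAB_adjoint_apply_eq (W.Bn n) (W.c_nonneg n)
    (W.bound n) (fun f ↦ (W.norm_le n f).trans (hB₁ f)) (W.Bn n h)
  calc ‖⟪W.Bn n g, W.Bn n h⟫_ℂ‖ = ‖⟪B g - k, d⟫_ℂ‖ := by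
        rw [inner_sub_left, Submodule.inner_left_of_mem_orthogonal hdD hk, sub_zero,
          ← adjoint_inner_right, ← hBd, adjoint_inner_right]
    _ ≤ ‖B g - k‖ * ‖B₁ h‖ :=
        (norm_inner_le_norm _ _).trans (by gcongr; exact hd.trans (W.norm_le n h))

theorem mem_orthogonal_orthogonal_DAB (hsum : B = B₁ + B₂)
    (horth : ∀ f g : E, ⟪B₁ f, B₂ g⟫_ℂ = 0) (hB₁ : AlmostDominated A B₁) (h : E) :
    B₁ h ∈ (DAB A B)ᗮᗮ := by
  obtain ⟨W⟩ := hB₁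
  have hB₁B : ∀ f, ‖B₁ f‖ ≤ ‖B f‖ := fun f ↦ by
    simpa [hsum] using norm_le_norm_add_of_inner_eq_zero (horth f f)
  refine (Submodule.mem_orthogonal _ _).mpr fun k hk ↦ norm_le_zero_iff.mp ?_
  have hrange : (B.range : Set K) ⊆ {y : K | ‖⟪y, B₁ h⟫_ℂ‖ ≤ ‖y - k‖ * ‖B₁ h‖} := by
    rintro _ ⟨g, rfl⟩
    have : ⟪B g, B₁ h⟫_ℂ = ⟪B₁ g, B₁ h⟫_ℂ := by
      rw [hsum, add_apply, inner_add_left, inner_eq_zero_symm.mp (horth h g), add_zero]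
    simpa [this] using W.norm_inner_le hB₁B hk g h
  have hk_closure : k ∈ closure (B.range : Set K) :=
    B.range.topologicalClosure_coe ▸ orthogonal_DAB_le_closure_range hk
  simpa using closure_minimal hrange (isClosed_le (by fun_prop) (by fun_prop)) hk_closure

end LebesgueDecomposition

/-- Let `B = B₁ + B₂` be any Lebesgue type decomposition of `B` with
respect to `A`, and let `B_reg = (I − P) ∘ B`, where `P` is the orthogonal projection of `K`
onto `D(A,B)ᗮ` (characterized by `P k ∈ D(A,B)ᗮ` and `k - P k ⊥ D(A,B)ᗮ`). Then
`‖B₁ h‖ ≤ ‖B_reg h‖` for all `h ∈ E`. -/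
theorem regular_part_maximal
    {E H K : Type}
    [NormedAddCommGroup E] [InnerProductSpace ℂ E] [CompleteSpace E]
    [NormedAddCommGroup H] [InnerProductSpace ℂ H] [CompleteSpace H]
    [NormedAddCommGroup K] [InnerProductSpace ℂ K] [CompleteSpace K]
    (A : E →L[ℂ] H) (B B₁ B₂ : E →L[ℂ] K)
    (hdec : IsLebesgueTypeDecomp A B B₁ B₂)
    (P : K →L[ℂ] K)
    (hP : ∀ k : K, P k ∈ (DAB A B)ᗮ ∧ k - P k ∈ ((DAB A B)ᗮ)ᗮ) :
    ∀ h : E, ‖B₁ h‖ ≤ ‖(B - P ∘L B) h‖ := by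
  obtain ⟨hsum, horth, hB₁, -⟩ := hdec
  intro h
  have hB₁P : ⟪B₁ h, P (B h)⟫_ℂ = 0 := Submodule.inner_left_of_mem_orthogonal (hP (B h)).1
    (mem_orthogonal_orthogonal_DAB hsum horth hB₁ h)
  have hsplit : (B - P ∘L B) h = B₁ h + (B₂ h - P (B h)) := by
    rw [sub_apply, comp_apply, hsum, add_apply]
    abel
  rw [hsplit]
  exact norm_le_norm_add_of_inner_eq_zero (𝕜 := ℂ)
    (by rw [inner_sub_right, horth, hB₁P, sub_zero])
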